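/- arXiv:1809.04767 — 6 statements merged into one kernel-verified Lean document; each statement's English description precedes it below -/
import Mathlib

section
/- If p ≥ 5 is a prime number, then the binomial coefficient C(2p-1, p-1) satisfies C(2p-1, p-1) ≡ 1 (mod p^3). -/
open Finset

/-- Expansion of a product `∏ (1 + e² gᵢ)` when `e³ = 0`. -/
lemma wol_prod_one_add {R : Type*} [CommRing R] (e : R) (he : e ^ 3 = 0)
    (s : Finset ℕ) (g : ℕ → R) :
    ∏ i ∈ s, (1 + e ^ 2 * g i) = 1 + e ^ 2 * ∑ i ∈ s, g i := by
  induction s using Finset.cons_induction with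
  | empty => simp
  | cons a s ha ih =>
    rw [Finset.prod_cons, ih, Finset.sum_cons]
    linear_combination (g a * (∑ i ∈ s, g i)) * e * he

/-- Reflection of a product over `Ioc m (2m)` when `p = 2m+1`. -/
@[to_additive]
lemma wol_prod_reflect {M : Type*} [CommMonoid M] (f : ℕ → M) (m p : ℕ)
    (hmp : p = 2 * m + 1) :
    ∏ k ∈ Finset.Ioc m (2 * m), f k = ∏ k ∈ Finset.Ioc 0 m, f (p - k) := by
  refine Finset.prod_nbij' (fun k => p - k) (fun k => p - k) ?_ ?_ ?_ ?_ ?_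
  · intro a ha; simp only [Finset.mem_Ioc] at ha ⊢; omega
  · intro a ha; simp only [Finset.mem_Ioc] at ha ⊢; omega
  · intro a ha; simp only [Finset.mem_Ioc] at ha; show p - (p - a) = a; omega
  · intro a ha; simp only [Finset.mem_Ioc] at ha; show p - (p - a) = a; omega
  · intro a ha
    simp only [Finset.mem_Ioc] at ha
    have : p - (p - a) = a := by omega
    show f a = f (p - (p - a))
    rw [this]

lemma wol_prod_Icc_add (p n : ℕ) :
    ∏ k ∈ Finset.Icc 1 n, (p + k) = (p + 1).ascFactorial n := by
  induction n with
  | zero => simp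
  | succ n ih =>
    rw [Finset.prod_Icc_succ_top (by omega), ih, Nat.ascFactorial_succ]
    ring

/-- Wolstenholme's Theorem: if `p ≥ 5` is prime, then `C(2p-1, p-1) ≡ 1 (mod p^3)`. -/
theorem wolstenholme (p : ℕ) (hp : p.Prime) (hp5 : 5 ≤ p) :
    (2 * p - 1).choose (p - 1) ≡ 1 [MOD p ^ 3] := by
  haveI : Fact p.Prime := ⟨hp⟩
  haveI : NeZero (p ^ 3) := ⟨pow_ne_zero 3 (by omega)⟩
  -- p is odd
  obtain ⟨m, hm⟩ : ∃ m, p = 2 * m + 1 := by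
    rcases hp.eq_two_or_odd' with h | ⟨m, hm⟩
    · omega
    · exact ⟨m, hm⟩
  have hm2 : 5 ≤ 2 * m + 1 := by omega
  have hdvd : p ∣ p ^ 3 := dvd_pow_self p (by norm_num)
  set π : ZMod (p ^ 3) →+* ZMod p := ZMod.castHom hdvd (ZMod p) with hπ
  -- units
  have hunit : ∀ k : ℕ, 0 < k → k < p → IsUnit ((k : ZMod (p ^ 3))) := by
    intro k h1 h2
    rw [ZMod.isUnit_iff_coprime]
    exact Nat.Coprime.pow_right 3
      (Nat.coprime_comm.mp ((hp.coprime_iff_not_dvd).mpr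
        (fun hd => by have := Nat.le_of_dvd h1 hd; omega)))
  have hp3 : (p : ZMod (p ^ 3)) ^ 3 = 0 := by
    have := ZMod.natCast_self (p ^ 3)
    push_cast at this
    exact this
  -- killing lemma
  have hkill : ∀ x : ZMod (p ^ 3), π x = 0 → (p : ZMod (p ^ 3)) ^ 2 * x = 0 := by
    intro x hx
    have hxv : ((x.val : ℕ) : ZMod (p ^ 3)) = x := by
      rw [ZMod.natCast_val, ZMod.cast_id]
    have hx' : ((x.val : ℕ) : ZMod p) = 0 := by
      rw [← map_natCast π, hxv, hx]
    obtain ⟨c, hc⟩ := (ZMod.natCast_eq_zero_iff _ _).1 hx'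
    have hxe : x = ((p * c : ℕ) : ZMod (p ^ 3)) := by rw [← hc, hxv]
    rw [hxe]
    push_cast
    linear_combination (c : ZMod (p ^ 3)) * hp3
  -- Step G: sum of inverse squares over the full range is zero
  have hG : ∑ k ∈ Finset.Ioc 0 (2 * m), ((k : ZMod p)⁻¹) ^ 2 = 0 := by
    have h1 : Finset.range p = insert 0 (Finset.Ioc 0 (2 * m)) := by
      ext x; simp only [Finset.mem_range, Finset.mem_insert, Finset.mem_Ioc]; omega
    have h2 : ∑ k ∈ Finset.range p, ((k : ZMod p)⁻¹) ^ 2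
        = ∑ k ∈ Finset.Ioc 0 (2 * m), ((k : ZMod p)⁻¹) ^ 2 := by
      rw [h1, Finset.sum_insert (by simp)]
      simp
    rw [← h2]
    have h3 : ∑ k ∈ Finset.range p, ((k : ZMod p)⁻¹) ^ 2 = ∑ x : ZMod p, (x⁻¹) ^ 2 := by
      refine Finset.sum_nbij' (fun k => (k : ZMod p)) (fun x => x.val) ?_ ?_ ?_ ?_ ?_
      · intro a _; exact Finset.mem_univ _
      · intro x _; simpa [Finset.mem_range] using ZMod.val_lt x
      · intro a ha; simp only [Finset.mem_range] at ha; exact ZMod.val_natCast_of_lt ha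
      · intro x _; show ((x.val : ℕ) : ZMod p) = x; rw [ZMod.natCast_val, ZMod.cast_id]
      · intro a _; rfl
    have h4 : ∑ x : ZMod p, (x⁻¹ : ZMod p) ^ 2 = ∑ x : ZMod p, x ^ 2 := by
      refine Finset.sum_nbij' (fun x => x⁻¹) (fun x => x⁻¹) ?_ ?_ ?_ ?_ ?_ <;>
        intro a _ <;> simp [inv_inv]
    rw [h3, h4]
    exact FiniteField.sum_pow_lt_card_sub_one (ZMod p) 2 (by rw [ZMod.card]; omega)
  -- Step F: half sum of inverse squares is zero
  have hT : ∑ k ∈ Finset.Ioc 0 m, ((k : ZMod p)⁻¹) ^ 2 = 0 := by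
    have hsplit : ((∑ k ∈ Finset.Ioc 0 m, ((k : ZMod p)⁻¹) ^ 2)
        + ∑ k ∈ Finset.Ioc m (2 * m), ((k : ZMod p)⁻¹) ^ 2) = 0 := by
      rw [Finset.sum_Ioc_consecutive _ (Nat.zero_le m) (by omega)]; exact hG
    rw [wol_sum_reflect _ m p hm] at hsplit
    have heq : ∀ k ∈ Finset.Ioc 0 m, (((p - k : ℕ) : ZMod p)⁻¹) ^ 2 = ((k : ZMod p)⁻¹) ^ 2 := by
      intro k hk; simp only [Finset.mem_Ioc] at hk
      have hpk : ((p - k : ℕ) : ZMod p) = -(k : ZMod p) := by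
        rw [Nat.cast_sub (by omega), ZMod.natCast_self]; ring
      rw [hpk, inv_neg]; ring
    rw [Finset.sum_congr rfl heq] at hsplit
    have h2 : (2 : ZMod p) ≠ 0 := by
      intro h
      have h' : ((2 : ℕ) : ZMod p) = 0 := by exact_mod_cast h
      have := (ZMod.natCast_eq_zero_iff 2 p).1 h'
      have := Nat.le_of_dvd (by norm_num) this
      omega
    have hmul : (2 : ZMod p) * (∑ k ∈ Finset.Ioc 0 m, ((k : ZMod p)⁻¹) ^ 2) = 0 := by
      linear_combination hsplit
    exact (mul_eq_zero.1 hmul).resolve_left h2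
  -- Step A: ℕ identity
  have hA : ∏ k ∈ Finset.Icc 1 (p - 1), (p + k) = (p - 1).factorial * ((2 * p - 1).choose (p - 1)) := by
    rw [wol_prod_Icc_add, Nat.ascFactorial_eq_factorial_mul_choose]
    have h : p + (p - 1) = 2 * p - 1 := by omega
    rw [h]
  -- Step B: cast to ZMod (p^3)
  have hB : ∏ k ∈ Finset.Icc 1 (p - 1), ((p : ZMod (p ^ 3)) + (k : ZMod (p ^ 3)))
      = ((p - 1).factorial : ZMod (p ^ 3)) * (((2 * p - 1).choose (p - 1) : ℕ) : ZMod (p ^ 3)) := by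
    have := congrArg (fun n : ℕ => (n : ZMod (p ^ 3))) hA
    push_cast at this
    exact this
  -- Step C: factor out k from each term
  have hfact : ∏ k ∈ Finset.Icc 1 (p - 1), ((p : ZMod (p ^ 3)) + (k : ZMod (p ^ 3)))
      = ((p - 1).factorial : ZMod (p ^ 3))
        * ∏ k ∈ Finset.Icc 1 (p - 1), (1 + (p : ZMod (p ^ 3)) * (k : ZMod (p ^ 3))⁻¹) := by
    have h1 : ∀ k ∈ Finset.Icc 1 (p - 1), ((p : ZMod (p ^ 3)) + (k : ZMod (p ^ 3)))
        = (k : ZMod (p ^ 3)) * (1 + (p : ZMod (p ^ 3)) * (k : ZMod (p ^ 3))⁻¹) := by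
      intro k hk; simp only [Finset.mem_Icc] at hk
      have hu := ZMod.mul_inv_of_unit ((k : ZMod (p ^ 3))) (hunit k (by omega) (by omega))
      linear_combination (-(p : ZMod (p ^ 3))) * hu
    rw [Finset.prod_congr rfl h1, Finset.prod_mul_distrib]
    congr 1
    have h2 : ∏ k ∈ Finset.Icc 1 (p - 1), (k : ZMod (p ^ 3))
        = (((p - 1).factorial : ℕ) : ZMod (p ^ 3)) := by
      rw [← Nat.cast_prod]
      congr 1
      rw [← Finset.prod_Ico_id_eq_factorial (p - 1)]
      apply Finset.prod_congr _ (fun _ _ => rfl)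
      ext x; simp only [Finset.mem_Icc, Finset.mem_Ico]; omega
    exact h2
  -- Step D: the product of (1 + p/k) is 1
  have hQ : ∏ k ∈ Finset.Icc 1 (p - 1), (1 + (p : ZMod (p ^ 3)) * (k : ZMod (p ^ 3))⁻¹) = 1 := by
    have hIcc : Finset.Icc 1 (p - 1) = Finset.Ioc 0 (2 * m) := by
      ext x; simp only [Finset.mem_Icc, Finset.mem_Ioc]; omega
    rw [hIcc, ← Finset.prod_Ioc_consecutive _ (Nat.zero_le m) (by omega : m ≤ 2 * m)]
    rw [wol_prod_reflect _ m p hm, ← Finset.prod_mul_distrib]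
    have hterm : ∀ k ∈ Finset.Ioc 0 m,
        (1 + (p : ZMod (p ^ 3)) * (k : ZMod (p ^ 3))⁻¹)
          * (1 + (p : ZMod (p ^ 3)) * (((p - k : ℕ) : ZMod (p ^ 3)))⁻¹)
        = 1 + (p : ZMod (p ^ 3)) ^ 2
            * (2 * ((k : ZMod (p ^ 3))⁻¹ * (((p - k : ℕ) : ZMod (p ^ 3)))⁻¹)) := by
      intro k hk; simp only [Finset.mem_Ioc] at hk
      have ha := ZMod.mul_inv_of_unit ((k : ZMod (p ^ 3))) (hunit k (by omega) (by omega))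
      have hb := ZMod.mul_inv_of_unit (((p - k : ℕ) : ZMod (p ^ 3))) (hunit (p - k) (by omega) (by omega))
      have hab : (p : ZMod (p ^ 3)) = (k : ZMod (p ^ 3)) + ((p - k : ℕ) : ZMod (p ^ 3)) := by
        rw [← Nat.cast_add]
        congr 1
        omega
      linear_combination (-(p : ZMod (p ^ 3)) * (k : ZMod (p ^ 3))⁻¹) * hb
        + (-(p : ZMod (p ^ 3)) * (((p - k : ℕ) : ZMod (p ^ 3)))⁻¹) * ha
        + (-(p : ZMod (p ^ 3)) * (k : ZMod (p ^ 3))⁻¹ * (((p - k : ℕ) : ZMod (p ^ 3)))⁻¹) * hab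
    rw [Finset.prod_congr rfl hterm, wol_prod_one_add _ hp3]
    have hS : π (∑ k ∈ Finset.Ioc 0 m,
        2 * ((k : ZMod (p ^ 3))⁻¹ * (((p - k : ℕ) : ZMod (p ^ 3)))⁻¹)) = 0 := by
      rw [map_sum]
      have hterm2 : ∀ k ∈ Finset.Ioc 0 m,
          π (2 * ((k : ZMod (p ^ 3))⁻¹ * (((p - k : ℕ) : ZMod (p ^ 3)))⁻¹))
          = -2 * ((k : ZMod p)⁻¹) ^ 2 := by
        intro k hk; simp only [Finset.mem_Ioc] at hk
        have hk0 : (k : ZMod p) ≠ 0 := by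
          intro h
          have := (ZMod.natCast_eq_zero_iff k p).1 h
          have := Nat.le_of_dvd (by omega) this
          omega
        have ha := ZMod.mul_inv_of_unit ((k : ZMod (p ^ 3))) (hunit k (by omega) (by omega))
        have hb := ZMod.mul_inv_of_unit (((p - k : ℕ) : ZMod (p ^ 3))) (hunit (p - k) (by omega) (by omega))
        have hpk : ((p - k : ℕ) : ZMod p) = -(k : ZMod p) := by
          rw [Nat.cast_sub (by omega), ZMod.natCast_self]; ring
        have ha' : (k : ZMod p) * π ((k : ZMod (p ^ 3))⁻¹) = 1 := by
          have h := congrArg π ha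
          rwa [map_mul, map_natCast, map_one] at h
        have hb' : (-(k : ZMod p)) * π ((((p - k : ℕ)) : ZMod (p ^ 3))⁻¹) = 1 := by
          have h := congrArg π hb
          rwa [map_mul, map_natCast, map_one, hpk] at h
        have e1 : π ((k : ZMod (p ^ 3))⁻¹) = (k : ZMod p)⁻¹ := by
          field_simp at ha' ⊢
          linear_combination ha'
        have e2 : π ((((p - k : ℕ)) : ZMod (p ^ 3))⁻¹) = -(k : ZMod p)⁻¹ := by
          have hk0' : (-(k : ZMod p)) ≠ 0 := neg_ne_zero.mpr hk0
          field_simp at hb' ⊢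
          linear_combination -hb'
        rw [map_mul, map_mul, e1, e2, map_ofNat]
        ring
      rw [Finset.sum_congr rfl hterm2]
      have hms : ∑ x ∈ Finset.Ioc 0 m, -2 * ((x : ZMod p)⁻¹) ^ 2
          = -2 * ∑ x ∈ Finset.Ioc 0 m, ((x : ZMod p)⁻¹) ^ 2 := by
        rw [Finset.mul_sum]
      rw [hms, hT, mul_zero]
    have hkS := hkill _ hS
    rw [hkS, add_zero]
  -- conclude
  have hunitf : IsUnit (((p - 1).factorial : ℕ) : ZMod (p ^ 3)) := by
    rw [ZMod.isUnit_iff_coprime]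
    refine Nat.Coprime.pow_right 3 (Nat.coprime_comm.mp (hp.coprime_iff_not_dvd.mpr ?_))
    intro hd
    have := (Nat.Prime.dvd_factorial hp).1 hd
    omega
  have hfinal : (((2 * p - 1).choose (p - 1) : ℕ) : ZMod (p ^ 3)) = 1 := by
    have h := hB.symm.trans hfact
    rw [hQ, mul_one] at h
    exact (IsUnit.mul_right_inj hunitf).1 (by rw [mul_one]; exact h)
  have h1 : (((2 * p - 1).choose (p - 1) : ℕ) : ZMod (p ^ 3)) = ((1 : ℕ) : ZMod (p ^ 3)) := by
    rw [hfinal]; norm_cast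
  exact (ZMod.natCast_eq_natCast_iff _ _ _).1 h1
end

section
/- For every natural number n ≥ 2 and every m with 0 ≤ m ≤ n, the identity n·P_{m-1} + P_m = Σ_{k=0}^{m} P_k · C(n-k, m-k) holds, where P_k is the k-th elementary symmetric function of {1, 2, …, n-1}, with the conventions P_0 = 1 and P_i = 0 for i < 0 and i ≥ n. -/
/-- `P n k` is the `k`-th elementary symmetric function of `{1, 2, …, n-1}`
(indexed by an integer `k`), with `P n k = 0` for `k < 0` and for `k ≥ n`,
and `P n 0 = 1`. -/
def P (n : ℕ) (k : ℤ) : ℤ :=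
  if 0 ≤ k then
    ∑ s ∈ Finset.powersetCard k.toNat (Finset.Icc 1 (n - 1)), ∏ a ∈ s, (a : ℤ)
  else 0

/-!
The `P n k` are the coefficients of the rising factorial
`ascPochhammer ℤ n = X (X + 1) ⋯ (X + n - 1) = ∑ₖ P n k X^(n-k)`.
Its successor can be peeled off on either side,
`(X + n) · ascPochhammer ℤ n = ascPochhammer ℤ (n + 1) = X · (ascPochhammer ℤ n).comp (X + 1)`,
and comparing the coefficients of `X^(n-m+1)` gives the identity: the left-hand side contributes
`n P_{m-1} + P_m`, while expanding each `(X + 1)^(n-k)` binomially contributes `∑ₖ P_k C(n-k, n-m)`.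
-/

open Polynomial Finset

theorem ascPochhammer_succ_eq_X_mul_prod {S : Type*} [CommSemiring S] (n : ℕ) :
    ascPochhammer S (n + 1) = X * ∏ i ∈ Icc 1 n, (X + C (i : S)) := by
  induction n with
  | zero => simp
  | succ n ih =>
    rw [ascPochhammer_succ_right, ih, prod_Icc_succ_top (by omega), mul_assoc, ← C_eq_natCast]

theorem coeff_comp_X_add_one {R : Type*} [CommSemiring R] (p : R[X]) (i : ℕ) :
    (p.comp (X + 1)).coeff i = ∑ j ∈ range (p.natDegree + 1), p.coeff j * (j.choose i : R) := by
  conv_lhs => rw [p.as_sum_range_C_mul_X_pow]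
  simp only [Polynomial.sum_comp, mul_comp, C_comp, X_pow_comp, finsetSum_coeff, coeff_C_mul,
    coeff_X_add_one_pow]

theorem P_natCast_eq_coeff_ascPochhammer {n k : ℕ} (hk : k ≤ n) :
    P n k = (ascPochhammer ℤ n).coeff (n - k) := by
  rcases n with _ | n
  · obtain rfl : k = 0 := by omega
    simp [P]
  rw [P, if_pos k.cast_nonneg, Int.toNat_natCast, ascPochhammer_succ_eq_X_mul_prod,
    Nat.add_sub_cancel]
  rcases hk.lt_or_eq with hk | rfl
  · rw [show n + 1 - k = n - k + 1 by omega, coeff_X_mul,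
      prod_X_add_C_coeff _ _ (by simp), Nat.card_Icc, Nat.add_sub_cancel,
      Nat.sub_sub_self (by omega)]
  · simp [powersetCard_eq_empty.2 (by simp : #(Icc 1 n) < n + 1)]

theorem P_natCast_sub_one_eq_coeff_ascPochhammer {n m : ℕ} (hm : m ≤ n) :
    P n ((m : ℤ) - 1) = (ascPochhammer ℤ n).coeff (n - m + 1) := by
  rcases m with _ | m
  · rw [P, if_neg (by simp), coeff_eq_zero_of_natDegree_lt (by simp)]
  · rw [Nat.cast_succ, add_sub_cancel_right, P_natCast_eq_coeff_ascPochhammer (by omega)]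
    congr 1
    omega

theorem sum_P_mul_choose_symm {n m : ℕ} (hm : m ≤ n) :
    ∑ k ∈ range (n + 1), P n k * ((n - k).choose (n - m) : ℤ) =
      ∑ k ∈ range (m + 1), P n k * ((n - k).choose (m - k) : ℤ) := by
  symm
  apply sum_subset_zero_on_sdiff (range_subset_range.2 (by omega))
  · intro k hk
    simp only [mem_sdiff, mem_range] at hk
    rw [Nat.choose_eq_zero_of_lt (by omega), Nat.cast_zero, mul_zero]
  · intro k hk
    have hkm : k ≤ m := by simpa [Nat.lt_succ_iff] using hk
    rw [Nat.choose_symm_of_eq_add (show n - k = (n - m) + (m - k) by omega)]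

theorem esymm_recurrence_general (n : ℕ) (m : ℕ) (hm : m ≤ n) :
    (n : ℤ) * P n ((m : ℤ) - 1) + P n m =
      ∑ k ∈ Finset.range (m + 1), P n k * ((n - k).choose (m - k) : ℤ) := by
  have peel_right : (ascPochhammer ℤ (n + 1)).coeff (n - m + 1) =
      (n : ℤ) * P n ((m : ℤ) - 1) + P n m := by
    rw [ascPochhammer_succ_right, mul_add, coeff_add, coeff_mul_X, ← C_eq_natCast, coeff_mul_C,
      P_natCast_sub_one_eq_coeff_ascPochhammer hm, P_natCast_eq_coeff_ascPochhammer hm]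
    ring
  have peel_left : (ascPochhammer ℤ (n + 1)).coeff (n - m + 1) =
      ∑ k ∈ range (n + 1), P n k * ((n - k).choose (n - m) : ℤ) := by
    rw [ascPochhammer_succ_left, coeff_X_mul, coeff_comp_X_add_one, ascPochhammer_natDegree,
      ← sum_range_reflect]
    refine sum_congr rfl fun k hk => ?_
    rw [P_natCast_eq_coeff_ascPochhammer (by simp at hk; omega), Nat.add_sub_cancel]
  rw [← peel_right, peel_left, sum_P_mul_choose_symm hm]

/-- For every `n ≥ 2` and every `m` with `0 ≤ m ≤ n`,
`n·P_{m-1} + P_m = Σ_{k=0}^{m} P_k · C(n-k, m-k)`. -/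
theorem esymm_recurrence (n : ℕ) (hn : 2 ≤ n) (m : ℕ) (hm : m ≤ n) :
    (n : ℤ) * P n ((m : ℤ) - 1) + P n m =
      ∑ k ∈ Finset.range (m + 1), P n k * ((n - k).choose (m - k) : ℤ) :=
  esymm_recurrence_general n m hm
end

section
/- For every natural number n ≥ 2 and every m with 2 ≤ m ≤ n, the identity (m-1)·P_{m-1} = Σ_{k=0}^{m-2} P_k · C(n-k, m-k) holds, where P_k is the k-th elementary symmetric function of {1, 2, …, n-1}. -/
/-!
With `f(X) = ∏_{a=1}^{n-1} (X + a) = ∑_k P_k X^{n-1-k}`, both `(X + 1) f(X + 1)` and `(X + n) f(X)`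
equal `∏_{b=1}^{n} (X + b)`. The first is `∑_k P_k (X + 1)^{n-k}`, so comparing coefficients of
`X^{n-m}` gives `∑_{k ≤ m} P_k C(n-k, m-k) = P_m + n P_{m-1}`; the terms `k = m` and `k = m - 1`
contribute `P_m` and `(n - m + 1) P_{m-1}`, which leaves the recurrence.
-/

open Polynomial Finset

theorem Finset.prod_X_add_C_eq_sum_esymm {R σ : Type*} [CommSemiring R] (s : Finset σ)
    (r : σ → R) :
    ∏ i ∈ s, (X + C (r i)) =
      ∑ j ∈ range (#s + 1), C (∑ t ∈ s.powersetCard j, ∏ i ∈ t, r i) * X ^ (#s - j) := by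
  have h := Multiset.prod_X_add_C_eq_sum_esymm (s.val.map r)
  rw [Multiset.map_map, Multiset.card_map] at h
  simp only [Finset.esymm_map_val] at h
  exact h

-- `esymmIcc N k` is `P_k` for `n = N + 1`.
def esymmIcc (N k : ℕ) : ℤ :=
  ∑ t ∈ powersetCard k (Icc 1 N), ∏ a ∈ t, (a : ℤ)

noncomputable def prodIcc (N : ℕ) : ℤ[X] :=
  ∏ a ∈ Icc 1 N, (X + C (a : ℤ))

lemma esymmIcc_eq_zero_of_lt {N k : ℕ} (h : N < k) : esymmIcc N k = 0 := by
  rw [esymmIcc, powersetCard_eq_empty.mpr (by simpa using h), sum_empty]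

lemma prodIcc_eq_sum_esymmIcc (N : ℕ) :
    prodIcc N = ∑ k ∈ range (N + 1), C (esymmIcc N k) * X ^ (N - k) := by
  have h := prod_X_add_C_eq_sum_esymm (Icc 1 N) (fun a : ℕ => (a : ℤ))
  rwa [Nat.card_Icc, add_tsub_cancel_right] at h

lemma coeff_prodIcc {N i : ℕ} (hi : i ≤ N) : (prodIcc N).coeff i = esymmIcc N (N - i) := by
  have h := prod_X_add_C_coeff (Icc 1 N) (fun a : ℕ => (a : ℤ)) (k := i) (by simpa using hi)
  rwa [Nat.card_Icc, add_tsub_cancel_right] at h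

lemma coeff_X_mul_prodIcc {N i : ℕ} (hi : i ≤ N + 1) :
    (X * prodIcc N).coeff i = esymmIcc N (N + 1 - i) := by
  cases i with
  | zero => simp [esymmIcc_eq_zero_of_lt]
  | succ i => rw [coeff_X_mul, coeff_prodIcc (by omega), Nat.add_sub_add_right]

lemma prodIcc_succ (N : ℕ) : prodIcc (N + 1) = (X + C ((N : ℤ) + 1)) * prodIcc N := by
  rw [prodIcc, prod_Icc_succ_top (by omega), mul_comm]
  push_cast
  rfl

lemma X_add_one_mul_prodIcc_comp (N : ℕ) :
    (X + 1) * (prodIcc N).comp (X + 1) = prodIcc (N + 1) := by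
  induction N with
  | zero => simp [prodIcc]
  | succ N ih =>
    rw [prodIcc_succ, mul_comp, mul_left_comm, ih, prodIcc_succ (N + 1)]
    simp only [add_comp, X_comp, C_comp, one_comp, Nat.cast_add, Nat.cast_one, C_add, C_1]
    ring

lemma sum_esymmIcc_mul_X_add_one_pow (N : ℕ) :
    ∑ k ∈ range (N + 1), C (esymmIcc N k) * (X + 1) ^ (N + 1 - k) =
      (X + C ((N : ℤ) + 1)) * prodIcc N := by
  rw [← prodIcc_succ, ← X_add_one_mul_prodIcc_comp, prodIcc_eq_sum_esymmIcc, Polynomial.sum_comp,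
    mul_sum]
  refine sum_congr rfl fun k hk => ?_
  rw [mul_comp, C_comp, pow_comp, X_comp, Nat.sub_add_comm (by simpa [Nat.lt_succ_iff] using hk),
    pow_succ]
  ring

lemma sum_esymmIcc_mul_choose {N M : ℕ} (hM : M ≤ N) :
    ∑ k ∈ range (N + 1), esymmIcc N k * (N + 1 - k).choose (N - M) =
      esymmIcc N (M + 1) + (N + 1) * esymmIcc N M := by
  have h := congrArg (coeff · (N - M)) (sum_esymmIcc_mul_X_add_one_pow N)
  simp only [finsetSum_coeff, coeff_C_mul, coeff_X_add_one_pow, add_mul, coeff_add,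
    coeff_X_mul_prodIcc (by omega : N - M ≤ N + 1), coeff_prodIcc (by omega : N - M ≤ N)] at h
  rw [h, show N + 1 - (N - M) = M + 1 by omega, Nat.sub_sub_self hM]
  ring

lemma sum_range_esymmIcc_mul_choose {N M : ℕ} (hM : M ≤ N) :
    ∑ k ∈ range (M + 2), esymmIcc N k * (N + 1 - k).choose (N - M) =
      esymmIcc N (M + 1) + (N + 1) * esymmIcc N M := by
  rw [← sum_esymmIcc_mul_choose hM]
  have h_top : esymmIcc N (N + 1) * (N + 1 - (N + 1)).choose (N - M) = 0 := by
    rw [esymmIcc_eq_zero_of_lt (by omega), zero_mul]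
  rw [← add_zero (∑ k ∈ range (N + 1), _), ← h_top, ← sum_range_succ]
  refine sum_subset (range_subset_range.mpr (by omega)) fun k hk hk' => ?_
  simp only [mem_range] at hk hk'
  rw [Nat.choose_eq_zero_of_lt (by omega), Nat.cast_zero, mul_zero]

theorem esymm_recurrence'_general (n : ℕ) (m : ℕ) (hm2 : 2 ≤ m) (hmn : m ≤ n) :
    ((m : ℤ) - 1) *
        (∑ s ∈ Finset.powersetCard (m - 1) (Finset.Icc 1 (n - 1)), ∏ a ∈ s, (a : ℤ)) =
      ∑ k ∈ Finset.range (m - 1),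
        (∑ s ∈ Finset.powersetCard k (Finset.Icc 1 (n - 1)), ∏ a ∈ s, (a : ℤ)) *
          ((n - k).choose (m - k) : ℤ) := by
  obtain ⟨N, rfl⟩ : ∃ N, n = N + 1 := ⟨n - 1, by omega⟩
  obtain ⟨M, rfl⟩ : ∃ M, m = M + 1 := ⟨m - 1, by omega⟩
  have hM : M ≤ N := by omega
  have key := sum_range_esymmIcc_mul_choose hM
  rw [sum_range_succ, sum_range_succ, Nat.add_sub_add_right, Nat.choose_self,
    show N + 1 - M = N - M + 1 by omega, Nat.choose_succ_self_right] at key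
  have h_symm : ∀ k ∈ range M, esymmIcc N k * ((N + 1 - k).choose (N - M) : ℤ) =
      esymmIcc N k * (N + 1 - k).choose (M + 1 - k) := fun k hk => by
    rw [mem_range] at hk
    rw [← Nat.choose_symm (by omega), show N + 1 - k - (N - M) = M + 1 - k by omega]
  rw [sum_congr rfl h_symm] at key
  push_cast [Nat.cast_sub hM] at key
  simp only [add_tsub_cancel_right, Nat.cast_add, Nat.cast_one]
  change (M : ℤ) * esymmIcc N M = ∑ k ∈ range M, esymmIcc N k * _
  linear_combination -key

/-- For every `n ≥ 2` and every `m` with `2 ≤ m ≤ n`,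
`(m-1)·P_{m-1} = Σ_{k=0}^{m-2} P_k · C(n-k, m-k)`, where `P_k` is the `k`-th
elementary symmetric function of `{1, 2, …, n-1}`. -/
theorem esymm_recurrence' (n : ℕ) (hn : 2 ≤ n) (m : ℕ) (hm2 : 2 ≤ m) (hmn : m ≤ n) :
    ((m : ℤ) - 1) *
        (∑ s ∈ Finset.powersetCard (m - 1) (Finset.Icc 1 (n - 1)), ∏ a ∈ s, (a : ℤ)) =
      ∑ k ∈ Finset.range (m - 1),
        (∑ s ∈ Finset.powersetCard k (Finset.Icc 1 (n - 1)), ∏ a ∈ s, (a : ℤ)) *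
          ((n - k).choose (m - k) : ℤ) :=
  esymm_recurrence'_general n m hm2 hmn
end

section
/- If p is a prime number, then p divides P_i for every i with 1 ≤ i ≤ p-2, where P_i is the i-th elementary symmetric function of {1, 2, …, p-1}. -/
open Finset

/-- If `p` is prime, then `p` divides `P_i` for every `1 ≤ i ≤ p-2`, where `P_i`
is the `i`-th elementary symmetric function of `{1, 2, …, p-1}`. -/
theorem prime_dvd_esymm (p : ℕ) (hp : p.Prime) (i : ℕ) (hi1 : 1 ≤ i) (hi2 : i ≤ p - 2) :
    p ∣ ∑ s ∈ Finset.powersetCard i (Finset.Icc 1 (p - 1)), ∏ a ∈ s, a := by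
  haveI : Fact p.Prime := ⟨hp⟩
  have hp3 : 3 ≤ p := by
    rcases Nat.lt_or_ge p 3 with h | h
    · interval_cases p <;> omega
    · exact h
  rw [← ZMod.natCast_eq_zero_iff]
  push_cast
  -- transfer the index set to ZMod p
  set T : Finset (ZMod p) := Finset.univ.erase 0 with hTdef
  have hIcc : Finset.Icc 1 (p - 1) = T.map ⟨ZMod.val, ZMod.val_injective p⟩ := by
    ext a
    simp only [Finset.mem_map, Finset.mem_Icc, hTdef, Finset.mem_erase, Finset.mem_univ,
      and_true, Function.Embedding.coeFn_mk]
    constructor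
    · rintro ⟨h1, h2⟩
      refine ⟨(a : ZMod p), ?_, ?_⟩
      · intro h0
        rw [ZMod.natCast_eq_zero_iff] at h0
        have := Nat.le_of_dvd (by omega) h0
        omega
      · rw [ZMod.val_natCast_of_lt (by omega)]
    · rintro ⟨x, hx0, rfl⟩
      have h1 : x.val ≠ 0 := fun h => hx0 (by
        have := ZMod.natCast_zmod_val x
        rwa [h, Nat.cast_zero, eq_comm] at this)
      have h2 : x.val < p := ZMod.val_lt x
      omega
  rw [hIcc, Finset.powersetCard_map, Finset.sum_map]
  have hcast : ∀ s : Finset (ZMod p),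
      (∏ a ∈ s.map ⟨ZMod.val, ZMod.val_injective p⟩, (a : ZMod p)) = ∏ a ∈ s, a := by
    intro s
    rw [Finset.prod_map]
    exact Finset.prod_congr rfl fun x _ => by
      simp only [Function.Embedding.coeFn_mk, ZMod.natCast_zmod_val]
  simp only [RelEmbedding.coe_toEmbedding, Finset.mapEmbedding_apply, hcast]
  -- now the goal is ∑ s ∈ powersetCard i T, ∏ a ∈ s, a = 0
  obtain ⟨g, hg⟩ := IsCyclic.exists_generator (α := (ZMod p)ˣ)
  have horder : orderOf g = p - 1 := by
    rw [orderOf_eq_card_of_forall_mem_zpowers hg, Nat.card_eq_fintype_card,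
      ZMod.card_units_eq_totient, Nat.totient_prime hp]
  set S : ZMod p := ∑ s ∈ Finset.powersetCard i T, ∏ a ∈ s, a with hS
  have hgne : (g : ZMod p) ^ i ≠ 1 := by
    intro h
    have : (g ^ i : (ZMod p)ˣ) = 1 := Units.ext (by push_cast; exact h)
    have := orderOf_dvd_of_pow_eq_one this
    rw [horder] at this
    have := Nat.le_of_dvd (by omega) this
    omega
  let emb : ZMod p ↪ ZMod p :=
    ⟨fun x => (g : ZMod p) * x, mul_right_injective₀ (Units.ne_zero g)⟩
  have hT : T.map emb = T := by
    ext a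
    simp only [Finset.mem_map, hTdef, Finset.mem_erase, Finset.mem_univ, and_true, emb,
      Function.Embedding.coeFn_mk]
    constructor
    · rintro ⟨b, hb0, rfl⟩
      exact mul_ne_zero (Units.ne_zero g) hb0
    · intro ha
      refine ⟨(g⁻¹ : (ZMod p)ˣ) * a, mul_ne_zero (Units.ne_zero g⁻¹) ha, ?_⟩
      show (g : ZMod p) * ((g⁻¹ : (ZMod p)ˣ) * a) = a
      rw [← mul_assoc]
      norm_cast
      rw [mul_inv_cancel, Units.val_one, one_mul]
  have key : S = (g : ZMod p) ^ i * S := by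
    conv_lhs => rw [hS, ← hT, Finset.powersetCard_map, Finset.sum_map]
    rw [Finset.mul_sum]
    refine Finset.sum_congr rfl fun s hs => ?_
    rw [Finset.mem_powersetCard] at hs
    rw [RelEmbedding.coe_toEmbedding, Finset.mapEmbedding_apply, Finset.prod_map]
    simp only [Function.Embedding.coeFn_mk, emb]
    rw [Finset.prod_mul_distrib, Finset.prod_const, hs.2]
  have : ((g : ZMod p) ^ i - 1) * S = 0 := by ring_nf; linear_combination -key
  rcases mul_eq_zero.mp this with h | h
  · exact absurd (sub_eq_zero.mp h) hgne
  · exact h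
end

section
/- If p ≥ 3 is a prime number, then the binomial coefficient C(2p-1, p-1) satisfies C(2p-1, p-1) ≡ 1 (mod p^2). -/
lemma prod_eps {R : Type*} [CommRing R] {ι : Type*} [DecidableEq ι] (ε : R) (hε : ε * ε = 0)
    (s : Finset ι) (f : ι → R) :
    ∏ i ∈ s, (ε + f i) = ∏ i ∈ s, f i + ε * ∑ i ∈ s, ∏ j ∈ s.erase i, f j := by
  induction s using Finset.induction_on with
  | empty => simp
  | @insert a s ha ih =>
    have hcong : ∀ i ∈ s, ∏ j ∈ (insert a s).erase i, f j = f a * ∏ j ∈ s.erase i, f j := by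
      intro i hi
      rw [Finset.erase_insert_of_ne (by rintro rfl; exact ha hi),
        Finset.prod_insert (fun h => ha (Finset.mem_of_mem_erase h))]
    rw [Finset.prod_insert ha, ih, Finset.prod_insert ha, Finset.sum_insert ha,
      Finset.erase_insert ha, Finset.sum_congr rfl hcong]
    rw [← Finset.mul_sum]
    linear_combination (∑ i ∈ s, ∏ j ∈ s.erase i, f j) * hε

lemma fact_prod_shift (p : ℕ) : ∀ n, p.factorial * ∏ k ∈ Finset.Icc 1 n, (p + k) = (p + n).factorial := by
  intro n
  induction n with
  | zero => simp
  | succ n ih =>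
    rw [Finset.prod_Icc_succ_top (Nat.succ_le_succ (Nat.zero_le n)), ← mul_assoc, ih,
      show p + (n+1) = (p + n) + 1 by omega, Nat.factorial_succ]
    ring

lemma sum_inv_eq_zero (p : ℕ) (hp : p.Prime) (hp3 : 3 ≤ p) :
    ∑ k ∈ Finset.Icc 1 (p-1), ((k : ZMod p))⁻¹ = 0 := by
  haveI : Fact p.Prime := ⟨hp⟩
  have hneg : ∑ k ∈ Finset.Icc 1 (p-1), ((k : ZMod p))⁻¹
      = ∑ k ∈ Finset.Icc 1 (p-1), -((k : ZMod p))⁻¹ := by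
    refine Finset.sum_nbij' (fun k => p - k) (fun k => p - k) ?_ ?_ ?_ ?_ ?_
    · intro a ha; simp only [Finset.mem_Icc] at *; omega
    · intro a ha; simp only [Finset.mem_Icc] at *; omega
    · intro a ha; simp only [Finset.mem_Icc] at ha; show p - (p - a) = a; omega
    · intro a ha; simp only [Finset.mem_Icc] at ha; show p - (p - a) = a; omega
    · intro a ha
      simp only [Finset.mem_Icc] at ha
      have : ((p - a : ℕ) : ZMod p) = -(a : ZMod p) := by
        have : ((p - a : ℕ) : ZMod p) = ((p : ℕ) : ZMod p) - (a : ZMod p) := by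
          push_cast [Nat.cast_sub (by omega : a ≤ p)]; ring
        rw [this, ZMod.natCast_self]; ring
      rw [this, inv_neg, neg_neg]
  have h2 : (2 : ZMod p) * ∑ k ∈ Finset.Icc 1 (p-1), ((k : ZMod p))⁻¹ = 0 := by
    rw [two_mul]
    nth_rewrite 2 [hneg]
    rw [← Finset.sum_add_distrib]
    simp
  have h2ne : (2 : ZMod p) ≠ 0 := by
    intro h
    have := (ZMod.natCast_eq_zero_iff 2 p).mp (by exact_mod_cast h)
    have := Nat.le_of_dvd (by norm_num) this
    omega
  exact (mul_eq_zero.mp h2).resolve_left h2ne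

/-- If `p ≥ 3` is prime, then `C(2p-1, p-1) ≡ 1 (mod p^2)`. -/
theorem wolstenholme_weak (p : ℕ) (hp : p.Prime) (hp3 : 3 ≤ p) :
    (2 * p - 1).choose (p - 1) ≡ 1 [MOD p ^ 2] := by
  haveI : Fact p.Prime := ⟨hp⟩
  set s : Finset ℕ := Finset.Icc 1 (p-1) with hs
  -- factorial product identity
  have hF : ∏ k ∈ s, k = (p-1).factorial := by
    rw [hs, ← Finset.Ico_add_one_right_eq_Icc]
    exact Finset.prod_Ico_id_eq_factorial (p-1)
  have hchoose : (2*p-1).choose (p-1) * (p-1).factorial = ∏ k ∈ s, (p + k) := by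
    have h1 := fact_prod_shift p (p-1)
    rw [show p + (p-1) = 2*p - 1 by omega] at h1
    have h2 := Nat.choose_mul_factorial_mul_factorial (show p - 1 ≤ 2*p-1 by omega)
    rw [show 2*p-1 - (p-1) = p by omega] at h2
    have : ((2*p-1).choose (p-1) * (p-1).factorial) * p.factorial
        = (∏ k ∈ s, (p + k)) * p.factorial := by
      rw [hs, h2, ← h1]; ring
    exact Nat.eq_of_mul_eq_mul_right p.factorial_pos this
  -- the sum S
  set S : ℕ := ∑ k ∈ s, ∏ j ∈ s.erase k, j with hS
  have hpS : p ∣ S := by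
    rw [← ZMod.natCast_eq_zero_iff]
    have hcast : (S : ZMod p) = ∑ k ∈ s, ∏ j ∈ s.erase k, (j : ZMod p) := by
      rw [hS]; push_cast; rfl
    have hterm : ∀ k ∈ s, ∏ j ∈ s.erase k, (j : ZMod p)
        = ((k : ZMod p))⁻¹ * ((p-1).factorial : ZMod p) := by
      intro k hk
      have hk0 : (k : ZMod p) ≠ 0 := by
        simp only [hs, Finset.mem_Icc] at hk
        rw [Ne, ZMod.natCast_eq_zero_iff]
        intro h; have := Nat.le_of_dvd (by omega) h; omega
      have hmul : (k : ZMod p) * ∏ j ∈ s.erase k, (j : ZMod p)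
          = ((p-1).factorial : ZMod p) := by
        rw [Finset.mul_prod_erase _ _ hk, ← hF]; push_cast; rfl
      field_simp [hk0] at hmul ⊢
      rw [← hmul]
    rw [hcast, Finset.sum_congr rfl hterm, ← Finset.sum_mul, hs,
      sum_inv_eq_zero p hp hp3, zero_mul]
  -- now in ZMod p^2
  have hpp : (p : ZMod (p^2)) * (p : ZMod (p^2)) = 0 := by
    rw [← Nat.cast_mul, ← pow_two, ZMod.natCast_self]
  have key : (((2*p-1).choose (p-1) : ℕ) : ZMod (p^2)) * ((p-1).factorial : ZMod (p^2))
      = ((p-1).factorial : ZMod (p^2)) := by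
    have hc := congrArg (fun n : ℕ => (n : ZMod (p^2))) hchoose
    simp only [Nat.cast_mul, Nat.cast_prod, Nat.cast_add] at hc
    rw [hc, prod_eps (p : ZMod (p^2)) hpp]
    have hS0 : (p : ZMod (p^2)) * ∑ i ∈ s, ∏ j ∈ s.erase i, (j : ZMod (p^2)) = 0 := by
      have : (∑ i ∈ s, ∏ j ∈ s.erase i, (j : ZMod (p^2))) = (S : ZMod (p^2)) := by
        rw [hS]; push_cast; rfl
      obtain ⟨m, hm⟩ := hpS
      rw [this, hm]; push_cast
      rw [← mul_assoc, hpp, zero_mul]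
    rw [hS0, add_zero, ← hF]; push_cast; rfl
  have hu : IsUnit (((p-1).factorial : ℕ) : ZMod (p^2)) := by
    rw [ZMod.isUnit_iff_coprime]
    refine Nat.Coprime.pow_right _ ?_
    have hnd : ¬ p ∣ (p-1).factorial := by
      intro h
      have := (Nat.Prime.dvd_factorial hp).mp h
      omega
    exact Nat.coprime_comm.mp (hp.coprime_iff_not_dvd.mpr hnd)
  have : (((2*p-1).choose (p-1) : ℕ) : ZMod (p^2)) = ((1 : ℕ) : ZMod (p^2)) := by
    have h1 : (((2*p-1).choose (p-1) : ℕ) : ZMod (p^2)) * ((p-1).factorial : ZMod (p^2))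
        = (1 : ZMod (p^2)) * ((p-1).factorial : ZMod (p^2)) := by rw [key, one_mul]
    exact_mod_cast hu.mul_right_cancel h1
  exact (ZMod.natCast_eq_natCast_iff _ _ _).mp this
end

section
/- If p ≥ 5 is a prime number, then p^2 divides P_{p-2}, where P_{p-2} is the (p-2)-th elementary symmetric function of {1, 2, …, p-1}. -/
/-!
Evaluating Vieta's formula for `∏_{a=1}^{p-1} (X - a)` at `X = p`, where the product equals
`∏ (p - a) = ∏ a` by the symmetry `a ↦ p - a`, gives `∑_{j < p-1} (-1)^j P_j p^(p-1-j) = 0`.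
Modulo `p` the numbers `1, …, p-1` are the units of `𝔽_p`, which multiplication by a
generator `g` permutes; hence `g^k P_k ≡ P_k` and `p ∣ P_k` for `0 < k < p - 1`. So every
term with `j < p - 2` is divisible by `p^3`, and therefore so is the remaining term `±P_{p-2} p`.
-/

open Finset Polynomial

namespace Multiset

theorem map_esymm {R S : Type*} [CommSemiring R] [CommSemiring S] (f : R →+* S)
    (s : Multiset R) (n : ℕ) : f (s.esymm n) = (s.map f).esymm n := by
  simp [esymm, map_multiset_sum, map_multiset_prod, powersetCard_map]

theorem esymm_card {R : Type*} [CommSemiring R] (s : Multiset R) :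
    s.esymm (card s) = s.prod := by
  simp [esymm, powersetCard_self]

theorem prod_map_sub_eq_sum_esymm {R : Type*} [CommRing R] (s : Multiset R) (x : R) :
    (s.map (x - ·)).prod =
      ∑ j ∈ Finset.range (card s + 1), (-1) ^ j * s.esymm j * x ^ (card s - j) := by
  simpa [eval_multiset_prod, eval_finsetSum, Function.comp_def, mul_assoc] using
    congrArg (eval x) (prod_X_sub_X_eq_sum_esymm s)

end Multiset

theorem FiniteField.esymm_units_eq_zero {K : Type*} [Field K] [Fintype K] [DecidableEq K]
    {k : ℕ} (hk : ¬ Fintype.card Kˣ ∣ k) :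
    (univ.val.map ((↑) : Kˣ → K)).esymm k = 0 := by
  set units : Multiset K := univ.val.map ((↑) : Kˣ → K)
  obtain ⟨g, hg⟩ := IsCyclic.exists_generator (α := Kˣ)
  have hgk : ((g ^ k : Kˣ) : K) ≠ 1 := by
    rwa [Ne, Units.val_eq_one, ← orderOf_dvd_iff_pow_eq_one,
      orderOf_eq_card_of_forall_mem_zpowers hg, Nat.card_eq_fintype_card]
  have hperm : units.map (g • ·) = units := by
    simpa [units, Multiset.map_map, Function.comp_def, Units.smul_def] using
      congrArg (Multiset.map ((↑) : Kˣ → K)) (Multiset.map_univ_val_equiv (Equiv.mulLeft g))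
  have hscale := Multiset.pow_smul_esymm g k units
  rw [hperm, Units.smul_def, smul_eq_mul] at hscale
  exact (mul_left_eq_self₀.mp hscale).resolve_left hgk

theorem ZMod.map_natCast_Icc_eq_units (p : ℕ) [Fact p.Prime] :
    (Icc 1 (p - 1)).val.map (Nat.cast : ℕ → ZMod p) =
      univ.val.map ((↑) : (ZMod p)ˣ → ZMod p) := by
  have hp := (Fact.out : p.Prime).one_lt
  refine (Multiset.Nodup.ext ?_ ?_).mpr fun x => ?_
  · refine (Icc 1 (p - 1)).nodup.map_on fun a ha b hb hab => ?_
    simp only [Finset.mem_val, mem_Icc] at ha hb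
    rwa [ZMod.natCast_eq_natCast_iff', Nat.mod_eq_of_lt (by omega),
      Nat.mod_eq_of_lt (by omega)] at hab
  · exact univ.nodup.map Units.val_injective
  simp only [Multiset.mem_map, Finset.mem_val, mem_Icc, mem_univ, true_and]
  constructor
  · rintro ⟨a, ⟨ha1, hap⟩, rfl⟩
    refine ⟨Units.mk0 _ ?_, rfl⟩
    rw [Ne, ZMod.natCast_eq_zero_iff]
    exact Nat.not_dvd_of_pos_of_lt ha1 (by omega)
  · rintro ⟨u, rfl⟩
    have hlt := (u : ZMod p).val_lt
    have hpos := ZMod.val_pos.mpr u.ne_zero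
    exact ⟨(u : ZMod p).val, ⟨hpos, by omega⟩, ZMod.natCast_zmod_val _⟩

theorem Nat.Prime.dvd_esymm_Icc {p k : ℕ} (hp : p.Prime) (hk0 : 0 < k) (hk : k < p - 1) :
    p ∣ (Icc 1 (p - 1)).val.esymm k := by
  have := Fact.mk hp
  have h := Multiset.map_esymm (Nat.castRingHom (ZMod p)) (Icc 1 (p - 1)).val k
  have hk' : ¬ Fintype.card (ZMod p)ˣ ∣ k := by
    rw [ZMod.card_units]
    exact Nat.not_dvd_of_pos_of_lt hk0 hk
  rw [Nat.coe_castRingHom, ZMod.map_natCast_Icc_eq_units, FiniteField.esymm_units_eq_zero hk'] at h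
  exact (ZMod.natCast_eq_zero_iff _ _).mp h

theorem sum_neg_one_pow_mul_esymm_Icc_mul_pow_eq_zero {p : ℕ} (hp : Odd p) :
    ∑ j ∈ range (p - 1),
      (-1 : ℤ) ^ j * ((Icc 1 (p - 1)).val.esymm j : ℕ) * (p : ℤ) ^ (p - 1 - j) = 0 := by
  set s : Multiset ℤ := (Icc 1 (p - 1)).val.map Nat.cast
  have hcard : Multiset.card s = p - 1 := by simp [s]
  have hreflect : (s.map ((p : ℤ) - ·)).prod = s.prod := by
    simp only [s, Multiset.map_map, Function.comp_def, Finset.prod_map_val]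
    refine prod_nbij' (p - ·) (p - ·) ?_ ?_ ?_ ?_ ?_ <;> intro a ha <;>
      simp only [mem_Icc] at ha ⊢ <;> omega
  have htop : s.esymm (p - 1) = s.prod := hcard ▸ s.esymm_card
  have hvieta := s.prod_map_sub_eq_sum_esymm p
  rw [hreflect, hcard, sum_range_succ, htop, (Nat.Odd.sub_odd hp odd_one).neg_one_pow,
    Nat.sub_self, pow_zero, one_mul, mul_one, right_eq_add] at hvieta
  have hcast (j : ℕ) : s.esymm j = ((Icc 1 (p - 1)).val.esymm j : ℤ) :=
    (Multiset.map_esymm (Nat.castRingHom ℤ) _ j).symm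
  simpa only [hcast] using hvieta

/-- If `p ≥ 5` is prime, then `p^2` divides `P_{p-2}`, the `(p-2)`-th elementary
symmetric function of `{1, 2, …, p-1}`. -/
theorem sq_prime_dvd_esymm (p : ℕ) (hp : p.Prime) (hp5 : 5 ≤ p) :
    p ^ 2 ∣ ∑ s ∈ Finset.powersetCard (p - 2) (Finset.Icc 1 (p - 1)), ∏ a ∈ s, a := by
  have hsum := sum_neg_one_pow_mul_esymm_Icc_mul_pow_eq_zero (hp.odd_of_ne_two (by omega))
  rw [show range (p - 1) = range (p - 2 + 1) by congr 1; omega, sum_range_succ,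
    show p - 1 - (p - 2) = 1 by omega, pow_one, ← eq_neg_iff_add_eq_zero] at hsum
  have hrest : (p : ℤ) ^ 3 ∣ ∑ j ∈ range (p - 2),
      (-1) ^ j * ((Icc 1 (p - 1)).val.esymm j : ℕ) * (p : ℤ) ^ (p - 1 - j) := by
    refine dvd_sum fun j hj => ?_
    rcases (show j < p - 3 ∨ j = p - 3 by simp only [mem_range] at hj; omega) with hj | rfl
    · exact dvd_mul_of_dvd_right (pow_dvd_pow _ (by omega)) _
    · obtain ⟨c, hc⟩ := hp.dvd_esymm_Icc (k := p - 3) (by omega) (by omega)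
      rw [show p - 1 - (p - 3) = 2 by omega, hc]
      exact ⟨(-1) ^ (p - 3) * c, by push_cast; ring⟩
  rw [hsum, dvd_neg, mul_assoc, (isUnit_neg_one.pow _).dvd_mul_left, pow_succ,
    mul_dvd_mul_iff_right (by exact_mod_cast hp.ne_zero)] at hrest
  have hesymm : ∑ s ∈ powersetCard (p - 2) (Icc 1 (p - 1)), ∏ a ∈ s, a =
      (Icc 1 (p - 1)).val.esymm (p - 2) := by
    simpa using (Finset.esymm_map_val id (Icc 1 (p - 1)) (p - 2)).symm
  rw [hesymm]
  exact_mod_cast hrest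
end
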